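/- Under the listed assumptions, 𝒜 carries the structure of a symmetric monoidal category: the tensor product ∧, unit object ⊤, associator b← (with inverse b→), left unitor σ→, right unitor δ→, and braiding c are natural isomorphisms satisfying Mac Lane's pentagon, triangle, and hexagon coherence conditions, with c self-inverse. -/
import Mathlib


open CategoryTheory

universe v u

/-- The data and assumptions of Section 2 of "Medial Commutativity":
a category `C` with a bifunctor `wedge`, a special object `top`,
medial commutativity arrows `cm` (natural in all four indices),
natural isomorphisms `δ` and `σ` with the unit object, and the equations
(ψc^m), (ψδ), (ψσ), (c^mc^m) and (VII). -/
structure MedialData (C : Type u) [Category.{v} C] where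
  /-- the bifunctor `∧` on objects -/
  wedge : C → C → C
  /-- the bifunctor `∧` on arrows -/
  whom : ∀ {A B X Y : C}, (A ⟶ B) → (X ⟶ Y) → (wedge A X ⟶ wedge B Y)
  /-- (bif 1) -/
  whom_id : ∀ (A B : C), whom (𝟙 A) (𝟙 B) = 𝟙 (wedge A B)
  /-- (bif 2) -/
  whom_comp : ∀ {A B B' X Y Y' : C} (f : A ⟶ B) (g : B ⟶ B') (h : X ⟶ Y) (k : Y ⟶ Y'),
      whom (f ≫ g) (h ≫ k) = whom f h ≫ whom g k
  /-- the special object `⊤` -/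
  top : C
  /-- medial commutativity `c^m_{A,B,X,Y} : (A∧B)∧(X∧Y) ⟶ (A∧X)∧(B∧Y)` -/
  cm : ∀ (A B X Y : C), wedge (wedge A B) (wedge X Y) ⟶ wedge (wedge A X) (wedge B Y)
  /-- (c^m nat) -/
  cm_natural : ∀ {A A' B B' X X' Y Y' : C}
      (f : A ⟶ A') (g : B ⟶ B') (h : X ⟶ X') (j : Y ⟶ Y'),
      cm A B X Y ≫ whom (whom f h) (whom g j) = whom (whom f g) (whom h j) ≫ cm A' B' X' Y'
  /-- `δ→_A : A∧⊤ ⟶ A` -/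
  δto : ∀ (A : C), wedge A top ⟶ A
  /-- `δ←_A : A ⟶ A∧⊤` -/
  δfrom : ∀ (A : C), A ⟶ wedge A top
  /-- naturality of `δ→` -/
  δto_natural : ∀ {A B : C} (f : A ⟶ B), whom f (𝟙 top) ≫ δto B = δto A ≫ f
  δto_δfrom : ∀ (A : C), δto A ≫ δfrom A = 𝟙 (wedge A top)
  δfrom_δto : ∀ (A : C), δfrom A ≫ δto A = 𝟙 A
  /-- `σ→_A : ⊤∧A ⟶ A` -/
  σto : ∀ (A : C), wedge top A ⟶ A
  /-- `σ←_A : A ⟶ ⊤∧A` -/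
  σfrom : ∀ (A : C), A ⟶ wedge top A
  /-- naturality of `σ→` -/
  σto_natural : ∀ {A B : C} (f : A ⟶ B), whom (𝟙 top) f ≫ σto B = σto A ≫ f
  σto_σfrom : ∀ (A : C), σto A ≫ σfrom A = 𝟙 (wedge top A)
  σfrom_σto : ∀ (A : C), σfrom A ≫ σto A = 𝟙 A
  /-- (ψc^m) -/
  psi_cm : ∀ (A₁ A₁' A₂ A₂' A₃ A₃' A₄ A₄' : C),
      cm (wedge A₁ A₁') (wedge A₂ A₂') (wedge A₃ A₃') (wedge A₄ A₄') ≫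
        whom (cm A₁ A₁' A₃ A₃') (cm A₂ A₂' A₄ A₄') ≫
        cm (wedge A₁ A₃) (wedge A₁' A₃') (wedge A₂ A₄) (wedge A₂' A₄')
      =
      whom (cm A₁ A₁' A₂ A₂') (cm A₃ A₃' A₄ A₄') ≫
        cm (wedge A₁ A₂) (wedge A₁' A₂') (wedge A₃ A₄) (wedge A₃' A₄') ≫
        whom (cm A₁ A₂ A₃ A₄) (cm A₁' A₂' A₃' A₄')
  /-- (ψδ) -/
  psi_δ : ∀ (A A' : C),
      δto (wedge A A') =
        whom (𝟙 (wedge A A')) (δfrom top) ≫ cm A A' top top ≫ whom (δto A) (δto A')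
  /-- (ψσ) -/
  psi_σ : ∀ (A A' : C),
      σto (wedge A A') =
        whom (δfrom top) (𝟙 (wedge A A')) ≫ cm top top A A' ≫ whom (σto A) (σto A')
  /-- (c^mc^m) -/
  cm_cm : ∀ (A B X Y : C), cm A B X Y ≫ cm A X B Y = 𝟙 (wedge (wedge A B) (wedge X Y))
  /-- (VII) -/
  δtop_eq_σtop : δto top = σto top

variable {C : Type u} [Category.{v} C]

/-- the associativity arrow `b→_{A,B,X} : A∧(B∧X) ⟶ (A∧B)∧X`. -/
def MedialData.bto (M : MedialData C) (A B X : C) :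
    M.wedge A (M.wedge B X) ⟶ M.wedge (M.wedge A B) X :=
  M.whom (M.δfrom A) (𝟙 (M.wedge B X)) ≫ M.cm A M.top B X ≫
    M.whom (𝟙 (M.wedge A B)) (M.σto X)

/-- the associativity arrow `b←_{A,B,X} : (A∧B)∧X ⟶ A∧(B∧X)`. -/
def MedialData.bfrom (M : MedialData C) (A B X : C) :
    M.wedge (M.wedge A B) X ⟶ M.wedge A (M.wedge B X) :=
  M.whom (𝟙 (M.wedge A B)) (M.σfrom X) ≫ M.cm A B M.top X ≫
    M.whom (M.δto A) (𝟙 (M.wedge B X))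

/-- the commutativity arrow `c_{A,B} : A∧B ⟶ B∧A`. -/
def MedialData.cc (M : MedialData C) (A B : C) : M.wedge A B ⟶ M.wedge B A :=
  M.whom (M.σfrom A) (M.δfrom B) ≫ M.cm M.top A B M.top ≫ M.whom (M.σto B) (M.δto A)

namespace MedialData

variable {C : Type u} [Category.{v} C] (M : MedialData C)

variable {M}

@[simp] lemma wid (A B : C) : M.whom (𝟙 A) (𝟙 B) = 𝟙 (M.wedge A B) := M.whom_id A B

@[simp] lemma fuse {A B B' X Y Y' : C} (f : A ⟶ B) (g : B ⟶ B') (h : X ⟶ Y) (k : Y ⟶ Y') :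
    M.whom f h ≫ M.whom g k = M.whom (f ≫ g) (h ≫ k) := (M.whom_comp f g h k).symm

@[simp] lemma fuse_assoc {A B B' X Y Y' Z : C} (f : A ⟶ B) (g : B ⟶ B') (h : X ⟶ Y)
    (k : Y ⟶ Y') (z : M.wedge B' Y' ⟶ Z) :
    M.whom f h ≫ (M.whom g k ≫ z) = M.whom (f ≫ g) (h ≫ k) ≫ z := by
  rw [← Category.assoc, fuse]

@[simp] lemma dd' (A : C) : M.δto A ≫ M.δfrom A = 𝟙 _ := M.δto_δfrom A
@[simp] lemma d'd (A : C) : M.δfrom A ≫ M.δto A = 𝟙 _ := M.δfrom_δto A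
@[simp] lemma ss' (A : C) : M.σto A ≫ M.σfrom A = 𝟙 _ := M.σto_σfrom A
@[simp] lemma s's (A : C) : M.σfrom A ≫ M.σto A = 𝟙 _ := M.σfrom_σto A
@[simp] lemma dd'_assoc {A : C} {Z : C} (z : M.wedge A M.top ⟶ Z) :
    M.δto A ≫ (M.δfrom A ≫ z) = z := by rw [← Category.assoc, dd', Category.id_comp]
@[simp] lemma d'd_assoc {A : C} {Z : C} (z : A ⟶ Z) :
    M.δfrom A ≫ (M.δto A ≫ z) = z := by rw [← Category.assoc, d'd, Category.id_comp]
@[simp] lemma ss'_assoc {A : C} {Z : C} (z : M.wedge M.top A ⟶ Z) :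
    M.σto A ≫ (M.σfrom A ≫ z) = z := by rw [← Category.assoc, ss', Category.id_comp]
@[simp] lemma s's_assoc {A : C} {Z : C} (z : A ⟶ Z) :
    M.σfrom A ≫ (M.σto A ≫ z) = z := by rw [← Category.assoc, s's, Category.id_comp]

/-- naturality of `δ←`. -/
lemma δfrom_natural {A B : C} (f : A ⟶ B) :
    f ≫ M.δfrom B = M.δfrom A ≫ M.whom f (𝟙 M.top) := by
  have h := M.δto_natural f
  have h2 : M.δto A ≫ f ≫ M.δfrom B = M.whom f (𝟙 M.top) := by
    rw [← Category.assoc, ← h, Category.assoc, dd', Category.comp_id]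
  rw [← h2, d'd_assoc]

/-- naturality of `σ←`. -/
lemma σfrom_natural {A B : C} (f : A ⟶ B) :
    f ≫ M.σfrom B = M.σfrom A ≫ M.whom (𝟙 M.top) f := by
  have h := M.σto_natural f
  have h2 : M.σto A ≫ f ≫ M.σfrom B = M.whom (𝟙 M.top) f := by
    rw [← Category.assoc, ← h, Category.assoc, ss', Category.comp_id]
  rw [← h2, s's_assoc]

/-- `σ←_⊤ = δ←_⊤`. -/
lemma σfrom_top : M.σfrom M.top = M.δfrom M.top := by
  have h : M.δto M.top ≫ M.δfrom M.top = 𝟙 _ := dd' _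
  conv_lhs => rw [← Category.comp_id (M.σfrom M.top), ← h]
  rw [M.δtop_eq_σtop, s's_assoc]

/-- (L2): `c^m_{A,B,⊤,⊤}`. -/
lemma cm_L2 (A B : C) : M.cm A B M.top M.top =
    M.whom (𝟙 (M.wedge A B)) (M.δto M.top) ≫ M.δto (M.wedge A B) ≫
      M.whom (M.δfrom A) (M.δfrom B) := by
  rw [M.psi_δ A B]; simp

/-- (L3): `c^m_{⊤,⊤,A,B}`. -/
lemma cm_L3 (A B : C) : M.cm M.top M.top A B =
    M.whom (M.δto M.top) (𝟙 (M.wedge A B)) ≫ M.σto (M.wedge A B) ≫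
      M.whom (M.σfrom A) (M.σfrom B) := by
  rw [M.psi_σ A B]; simp

/-- (L2inv): `c^m_{A,⊤,B,⊤}`. -/
lemma cm_L2inv (A B : C) : M.cm A M.top B M.top =
    M.whom (M.δto A) (M.δto B) ≫ M.δfrom (M.wedge A B) ≫
      M.whom (𝟙 (M.wedge A B)) (M.δfrom M.top) := by
  have h : M.cm A B M.top M.top ≫
      (M.whom (M.δto A) (M.δto B) ≫ M.δfrom (M.wedge A B) ≫
        M.whom (𝟙 (M.wedge A B)) (M.δfrom M.top)) = 𝟙 _ := by
    rw [cm_L2]; simp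
  calc M.cm A M.top B M.top
      = (M.cm A M.top B M.top ≫ M.cm A B M.top M.top) ≫
        (M.whom (M.δto A) (M.δto B) ≫ M.δfrom (M.wedge A B) ≫
          M.whom (𝟙 (M.wedge A B)) (M.δfrom M.top)) := by
        rw [Category.assoc, h, Category.comp_id]
    _ = _ := by rw [M.cm_cm A M.top B M.top, Category.id_comp]

/-- (L3inv): `c^m_{⊤,A,⊤,B}`. -/
lemma cm_L3inv (A B : C) : M.cm M.top A M.top B =
    M.whom (M.σto A) (M.σto B) ≫ M.σfrom (M.wedge A B) ≫
      M.whom (M.δfrom M.top) (𝟙 (M.wedge A B)) := by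
  have h : M.cm M.top M.top A B ≫
      (M.whom (M.σto A) (M.σto B) ≫ M.σfrom (M.wedge A B) ≫
        M.whom (M.δfrom M.top) (𝟙 (M.wedge A B))) = 𝟙 _ := by
    rw [cm_L3]; simp
  calc M.cm M.top A M.top B
      = (M.cm M.top A M.top B ≫ M.cm M.top M.top A B) ≫
        (M.whom (M.σto A) (M.σto B) ≫ M.σfrom (M.wedge A B) ≫
          M.whom (M.δfrom M.top) (𝟙 (M.wedge A B))) := by
        rw [Category.assoc, h, Category.comp_id]
    _ = _ := by rw [M.cm_cm M.top A M.top B, Category.id_comp]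

@[simp] lemma cmcm (A B X Y : C) :
    M.cm A B X Y ≫ M.cm A X B Y = 𝟙 _ := M.cm_cm A B X Y

@[simp] lemma cmcm_assoc {A B X Y Z : C}
    (z : M.wedge (M.wedge A B) (M.wedge X Y) ⟶ Z) :
    M.cm A B X Y ≫ (M.cm A X B Y ≫ z) = z := by
  rw [← Category.assoc, cmcm, Category.id_comp]

/-- `c^m_{A,⊤,B,X}` in terms of `b→`. -/
lemma cm_bto (A B X : C) : M.cm A M.top B X =
    M.whom (M.δto A) (𝟙 (M.wedge B X)) ≫ M.bto A B X ≫
      M.whom (𝟙 (M.wedge A B)) (M.σfrom X) := by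
  simp [MedialData.bto]

/-- `c^m_{A,B,⊤,X}` in terms of `b←`. -/
lemma cm_bfrom (A B X : C) : M.cm A B M.top X =
    M.whom (𝟙 (M.wedge A B)) (M.σto X) ≫ M.bfrom A B X ≫
      M.whom (M.δfrom A) (𝟙 (M.wedge B X)) := by
  simp [MedialData.bfrom]

/-- `c^m_{⊤,A,B,⊤}` in terms of `c`. -/
lemma cm_cc (A B : C) : M.cm M.top A B M.top =
    M.whom (M.σto A) (M.δto B) ≫ M.cc A B ≫
      M.whom (M.σfrom B) (M.δfrom A) := by
  simp [MedialData.cc]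

lemma bfrom_bto (A B X : C) :
    M.bfrom A B X ≫ M.bto A B X = 𝟙 (M.wedge (M.wedge A B) X) := by
  simp [MedialData.bto, MedialData.bfrom]

lemma bto_bfrom (A B X : C) :
    M.bto A B X ≫ M.bfrom A B X = 𝟙 (M.wedge A (M.wedge B X)) := by
  simp [MedialData.bto, MedialData.bfrom]

/-- naturality of `b→`. -/
lemma bto_natural {A A' B B' X X' : C} (f : A ⟶ A') (g : B ⟶ B') (h : X ⟶ X') :
    M.whom f (M.whom g h) ≫ M.bto A' B' X' = M.bto A B X ≫ M.whom (M.whom f g) h := by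
  calc M.whom f (M.whom g h) ≫ M.bto A' B' X'
      = M.whom (M.δfrom A) (𝟙 (M.wedge B X)) ≫
          M.whom (M.whom f (𝟙 M.top)) (M.whom g h) ≫ M.cm A' M.top B' X' ≫
          M.whom (𝟙 (M.wedge A' B')) (M.σto X') := by
        simp [MedialData.bto, δfrom_natural]
    _ = M.whom (M.δfrom A) (𝟙 (M.wedge B X)) ≫ M.cm A M.top B X ≫
          M.whom (M.whom f g) (M.whom (𝟙 M.top) h) ≫
          M.whom (𝟙 (M.wedge A' B')) (M.σto X') := by
        slice_lhs 2 3 => rw [← M.cm_natural f (𝟙 M.top) g h]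
        simp
    _ = M.bto A B X ≫ M.whom (M.whom f g) h := by
        simp [MedialData.bto, σto_natural]

/-- naturality of `b←`. -/
lemma bfrom_natural {A A' B B' X X' : C} (f : A ⟶ A') (g : B ⟶ B') (h : X ⟶ X') :
    M.whom (M.whom f g) h ≫ M.bfrom A' B' X' = M.bfrom A B X ≫ M.whom f (M.whom g h) := by
  calc M.whom (M.whom f g) h ≫ M.bfrom A' B' X'
      = M.whom (𝟙 (M.wedge A B)) (M.σfrom X) ≫
          M.whom (M.whom f g) (M.whom (𝟙 M.top) h) ≫ M.cm A' B' M.top X' ≫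
          M.whom (M.δto A') (𝟙 (M.wedge B' X')) := by
        simp [MedialData.bfrom, σfrom_natural]
    _ = M.whom (𝟙 (M.wedge A B)) (M.σfrom X) ≫ M.cm A B M.top X ≫
          M.whom (M.whom f (𝟙 M.top)) (M.whom g h) ≫
          M.whom (M.δto A') (𝟙 (M.wedge B' X')) := by
        slice_lhs 2 3 => rw [← M.cm_natural f g (𝟙 M.top) h]
        simp
    _ = M.bfrom A B X ≫ M.whom f (M.whom g h) := by
        simp [MedialData.bfrom, M.δto_natural]

/-- naturality of `c`. -/
lemma cc_natural {A A' B B' : C} (f : A ⟶ A') (g : B ⟶ B') :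
    M.whom f g ≫ M.cc A' B' = M.cc A B ≫ M.whom g f := by
  calc M.whom f g ≫ M.cc A' B'
      = M.whom (M.σfrom A) (M.δfrom B) ≫
          M.whom (M.whom (𝟙 M.top) f) (M.whom g (𝟙 M.top)) ≫ M.cm M.top A' B' M.top ≫
          M.whom (M.σto B') (M.δto A') := by
        simp [MedialData.cc, σfrom_natural, δfrom_natural]
    _ = M.whom (M.σfrom A) (M.δfrom B) ≫ M.cm M.top A B M.top ≫
          M.whom (M.whom (𝟙 M.top) g) (M.whom f (𝟙 M.top)) ≫
          M.whom (M.σto B') (M.δto A') := by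
        slice_lhs 2 3 => rw [← M.cm_natural (𝟙 M.top) f g (𝟙 M.top)]
        simp
    _ = M.cc A B ≫ M.whom g f := by
        simp [MedialData.cc, M.σto_natural, M.δto_natural]

lemma cc_cc (A B : C) : M.cc A B ≫ M.cc B A = 𝟙 (M.wedge A B) := by
  simp [MedialData.cc]

/-- the outer σ-triangle. -/
lemma Ksigma (B X : C) : M.bto M.top B X =
    M.σto (M.wedge B X) ≫ M.whom (M.σfrom B) (𝟙 X) := by
  simp [MedialData.bto, cm_L3]

/-- the outer δ-triangle. -/
lemma Kdelta (A B : C) : M.bto A B M.top =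
    M.whom (𝟙 A) (M.δto B) ≫ M.δfrom (M.wedge A B) := by
  simp [MedialData.bto, cm_L2inv, ← M.δtop_eq_σtop]

end MedialData
namespace MedialData

variable {C : Type u} [Category.{v} C] {M : MedialData C}

/-- left half of the pentagon chase -/
lemma pent_L (A B X Y : C) :
    M.whom (M.δfrom A ≫ M.δfrom (M.wedge A M.top) ≫ M.whom (𝟙 (M.wedge A M.top)) (M.δfrom M.top)) (M.whom (M.δfrom B) (𝟙 (M.wedge X Y))) ≫ M.cm (M.wedge A M.top) (M.wedge M.top M.top) (M.wedge B M.top) (M.wedge X Y) ≫ M.whom (M.cm A M.top B M.top) (M.cm M.top M.top X Y) ≫ M.cm (M.wedge A B) (M.wedge M.top M.top) (M.wedge M.top X) (M.wedge M.top Y)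
    = M.bto A B (M.wedge X Y) ≫ M.bto (M.wedge A B) X Y ≫ M.whom (M.whom (𝟙 (M.wedge A B)) (M.σfrom X)) (M.σfrom Y ≫ M.whom (M.δfrom M.top) (M.σfrom Y)) := by
  calc M.whom (M.δfrom A ≫ M.δfrom (M.wedge A M.top) ≫ M.whom (𝟙 (M.wedge A M.top)) (M.δfrom M.top)) (M.whom (M.δfrom B) (𝟙 (M.wedge X Y))) ≫ M.cm (M.wedge A M.top) (M.wedge M.top M.top) (M.wedge B M.top) (M.wedge X Y) ≫ M.whom (M.cm A M.top B M.top) (M.cm M.top M.top X Y) ≫ M.cm (M.wedge A B) (M.wedge M.top M.top) (M.wedge M.top X) (M.wedge M.top Y)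
    _ = M.whom (M.δfrom A ≫ M.δfrom (M.wedge A M.top)) (M.whom (M.δfrom B) (𝟙 (M.wedge X Y))) ≫ (M.whom (M.whom (𝟙 (M.wedge A M.top)) (M.δfrom M.top)) (M.whom (𝟙 (M.wedge B M.top)) (𝟙 (M.wedge X Y))) ≫ M.cm (M.wedge A M.top) (M.wedge M.top M.top) (M.wedge B M.top) (M.wedge X Y)) ≫ M.whom (M.cm A M.top B M.top) (M.cm M.top M.top X Y) ≫ M.cm (M.wedge A B) (M.wedge M.top M.top) (M.wedge M.top X) (M.wedge M.top Y) := by simp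
    _ = M.whom (M.δfrom A ≫ M.δfrom (M.wedge A M.top)) (M.whom (M.δfrom B) (𝟙 (M.wedge X Y))) ≫ (M.cm (M.wedge A M.top) M.top (M.wedge B M.top) (M.wedge X Y) ≫ M.whom (M.whom (𝟙 (M.wedge A M.top)) (𝟙 (M.wedge B M.top))) (M.whom (M.δfrom M.top) (𝟙 (M.wedge X Y)))) ≫ M.whom (M.cm A M.top B M.top) (M.cm M.top M.top X Y) ≫ M.cm (M.wedge A B) (M.wedge M.top M.top) (M.wedge M.top X) (M.wedge M.top Y) := by rw [← M.cm_natural (𝟙 (M.wedge A M.top)) (M.δfrom M.top) (𝟙 (M.wedge B M.top)) (𝟙 (M.wedge X Y))]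
    _ = M.whom (M.δfrom A) (M.whom (M.δfrom B) (𝟙 (M.wedge X Y))) ≫ M.bto (M.wedge A M.top) (M.wedge B M.top) (M.wedge X Y) ≫ M.whom (𝟙 (M.wedge (M.wedge A M.top) (M.wedge B M.top))) (M.σfrom (M.wedge X Y)) ≫ M.whom (M.whom (𝟙 (M.wedge A M.top)) (𝟙 (M.wedge B M.top))) (M.whom (M.δfrom M.top) (𝟙 (M.wedge X Y))) ≫ M.whom (M.cm A M.top B M.top) (M.cm M.top M.top X Y) ≫ M.cm (M.wedge A B) (M.wedge M.top M.top) (M.wedge M.top X) (M.wedge M.top Y) := by rw [cm_bto]; simp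
    _ = M.bto A B (M.wedge X Y) ≫ M.whom (M.whom (M.δfrom A) (M.δfrom B)) (𝟙 (M.wedge X Y)) ≫ M.whom (𝟙 (M.wedge (M.wedge A M.top) (M.wedge B M.top))) (M.σfrom (M.wedge X Y)) ≫ M.whom (M.whom (𝟙 (M.wedge A M.top)) (𝟙 (M.wedge B M.top))) (M.whom (M.δfrom M.top) (𝟙 (M.wedge X Y))) ≫ M.whom (M.cm A M.top B M.top) (M.cm M.top M.top X Y) ≫ M.cm (M.wedge A B) (M.wedge M.top M.top) (M.wedge M.top X) (M.wedge M.top Y) := by rw [← Category.assoc, bto_natural, Category.assoc]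
    _ = M.bto A B (M.wedge X Y) ≫ M.whom (M.δfrom (M.wedge A B)) (M.whom (M.σfrom X) (M.σfrom Y)) ≫ (M.whom (M.whom (𝟙 (M.wedge A B)) (M.δfrom M.top)) (M.whom (𝟙 (M.wedge M.top X)) (𝟙 (M.wedge M.top Y))) ≫ M.cm (M.wedge A B) (M.wedge M.top M.top) (M.wedge M.top X) (M.wedge M.top Y)) := by rw [cm_L2inv, cm_L3]; simp
    _ = M.bto A B (M.wedge X Y) ≫ M.whom (M.δfrom (M.wedge A B)) (M.whom (M.σfrom X) (M.σfrom Y)) ≫ (M.cm (M.wedge A B) M.top (M.wedge M.top X) (M.wedge M.top Y) ≫ M.whom (M.whom (𝟙 (M.wedge A B)) (𝟙 (M.wedge M.top X))) (M.whom (M.δfrom M.top) (𝟙 (M.wedge M.top Y)))) := by rw [← M.cm_natural (𝟙 (M.wedge A B)) (M.δfrom M.top) (𝟙 (M.wedge M.top X)) (𝟙 (M.wedge M.top Y))]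
    _ = M.bto A B (M.wedge X Y) ≫ M.whom (𝟙 (M.wedge A B)) (M.whom (M.σfrom X) (M.σfrom Y)) ≫ M.bto (M.wedge A B) (M.wedge M.top X) (M.wedge M.top Y) ≫ M.whom (𝟙 (M.wedge (M.wedge A B) (M.wedge M.top X))) (M.σfrom (M.wedge M.top Y)) ≫ M.whom (M.whom (𝟙 (M.wedge A B)) (𝟙 (M.wedge M.top X))) (M.whom (M.δfrom M.top) (𝟙 (M.wedge M.top Y))) := by rw [cm_bto]; simp
    _ = M.bto A B (M.wedge X Y) ≫ M.bto (M.wedge A B) X Y ≫ M.whom (M.whom (𝟙 (M.wedge A B)) (M.σfrom X)) (M.σfrom Y) ≫ M.whom (𝟙 (M.wedge (M.wedge A B) (M.wedge M.top X))) (M.σfrom (M.wedge M.top Y)) ≫ M.whom (M.whom (𝟙 (M.wedge A B)) (𝟙 (M.wedge M.top X))) (M.whom (M.δfrom M.top) (𝟙 (M.wedge M.top Y))) := by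
      slice_lhs 2 3 => rw [bto_natural]
      simp only [Category.assoc]
    _ = M.bto A B (M.wedge X Y) ≫ M.bto (M.wedge A B) X Y ≫ M.whom (M.whom (𝟙 (M.wedge A B)) (M.σfrom X)) (M.σfrom Y ≫ M.whom (M.δfrom M.top) (M.σfrom Y)) := by simp [reassoc_of% (σfrom_natural (M.σfrom Y))]

end MedialData
namespace MedialData

variable {C : Type u} [Category.{v} C] {M : MedialData C}

/-- right half of the pentagon chase -/
lemma pent_R (A B X Y : C) :
    M.whom (M.δfrom A ≫ M.δfrom (M.wedge A M.top) ≫ M.whom (𝟙 (M.wedge A M.top)) (M.δfrom M.top)) (M.whom (M.δfrom B) (𝟙 (M.wedge X Y))) ≫ M.whom (M.cm A M.top M.top M.top) (M.cm B M.top X Y) ≫ M.cm (M.wedge A M.top) (M.wedge M.top M.top) (M.wedge B X) (M.wedge M.top Y) ≫ M.whom (M.cm A M.top B X) (M.cm M.top M.top M.top Y)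
    = M.whom (𝟙 A) (M.bto B X Y) ≫ M.bto A (M.wedge B X) Y ≫ M.whom (M.bto A B X) (𝟙 Y) ≫ M.whom (M.whom (𝟙 (M.wedge A B)) (M.σfrom X)) (M.σfrom Y ≫ M.whom (M.δfrom M.top) (M.σfrom Y)) := by
  have h1 : (M.δfrom A ≫ M.δfrom (M.wedge A M.top) ≫ M.whom (𝟙 (M.wedge A M.top)) (M.δfrom M.top)) ≫ M.cm A M.top M.top M.top = M.δfrom A ≫ M.δfrom (M.wedge A M.top) ≫ M.whom (𝟙 (M.wedge A M.top)) (M.δfrom M.top) := by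
    rw [cm_L2inv]
    simp [← reassoc_of% (δfrom_natural (M.δto A))]
  have h2 : (M.whom (M.δfrom B) (𝟙 (M.wedge X Y))) ≫ M.cm B M.top X Y = M.bto B X Y ≫ M.whom (𝟙 (M.wedge B X)) (M.σfrom Y) := by
    rw [cm_bto]; simp
  calc M.whom (M.δfrom A ≫ M.δfrom (M.wedge A M.top) ≫ M.whom (𝟙 (M.wedge A M.top)) (M.δfrom M.top)) (M.whom (M.δfrom B) (𝟙 (M.wedge X Y))) ≫ M.whom (M.cm A M.top M.top M.top) (M.cm B M.top X Y) ≫ M.cm (M.wedge A M.top) (M.wedge M.top M.top) (M.wedge B X) (M.wedge M.top Y) ≫ M.whom (M.cm A M.top B X) (M.cm M.top M.top M.top Y)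
    _ = M.whom ((M.δfrom A ≫ M.δfrom (M.wedge A M.top) ≫ M.whom (𝟙 (M.wedge A M.top)) (M.δfrom M.top)) ≫ M.cm A M.top M.top M.top) ((M.whom (M.δfrom B) (𝟙 (M.wedge X Y))) ≫ M.cm B M.top X Y) ≫ M.cm (M.wedge A M.top) (M.wedge M.top M.top) (M.wedge B X) (M.wedge M.top Y) ≫ M.whom (M.cm A M.top B X) (M.cm M.top M.top M.top Y) := by simp
    _ = M.whom (M.δfrom A ≫ M.δfrom (M.wedge A M.top) ≫ M.whom (𝟙 (M.wedge A M.top)) (M.δfrom M.top)) (M.bto B X Y ≫ M.whom (𝟙 (M.wedge B X)) (M.σfrom Y)) ≫ M.cm (M.wedge A M.top) (M.wedge M.top M.top) (M.wedge B X) (M.wedge M.top Y) ≫ M.whom (M.cm A M.top B X) (M.cm M.top M.top M.top Y) := by rw [h1, h2]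
    _ = M.whom (𝟙 A) (M.bto B X Y) ≫ M.whom (M.δfrom A ≫ M.δfrom (M.wedge A M.top)) (M.whom (𝟙 (M.wedge B X)) (M.σfrom Y)) ≫ (M.whom (M.whom (𝟙 (M.wedge A M.top)) (M.δfrom M.top)) (M.whom (𝟙 (M.wedge B X)) (𝟙 (M.wedge M.top Y))) ≫ M.cm (M.wedge A M.top) (M.wedge M.top M.top) (M.wedge B X) (M.wedge M.top Y)) ≫ M.whom (M.cm A M.top B X) (M.cm M.top M.top M.top Y) := by simp
    _ = M.whom (𝟙 A) (M.bto B X Y) ≫ M.whom (M.δfrom A ≫ M.δfrom (M.wedge A M.top)) (M.whom (𝟙 (M.wedge B X)) (M.σfrom Y)) ≫ (M.cm (M.wedge A M.top) M.top (M.wedge B X) (M.wedge M.top Y) ≫ M.whom (M.whom (𝟙 (M.wedge A M.top)) (𝟙 (M.wedge B X))) (M.whom (M.δfrom M.top) (𝟙 (M.wedge M.top Y)))) ≫ M.whom (M.cm A M.top B X) (M.cm M.top M.top M.top Y) := by rw [← M.cm_natural (𝟙 (M.wedge A M.top)) (M.δfrom M.top) (𝟙 (M.wedge B X)) (𝟙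 (M.wedge M.top Y))]
    _ = M.whom (𝟙 A) (M.bto B X Y) ≫ M.whom (M.δfrom A) (M.whom (𝟙 (M.wedge B X)) (M.σfrom Y)) ≫ M.bto (M.wedge A M.top) (M.wedge B X) (M.wedge M.top Y) ≫ M.whom (𝟙 (M.wedge (M.wedge A M.top) (M.wedge B X))) (M.σfrom (M.wedge M.top Y)) ≫ M.whom (M.whom (𝟙 (M.wedge A M.top)) (𝟙 (M.wedge B X))) (M.whom (M.δfrom M.top) (𝟙 (M.wedge M.top Y))) ≫ M.whom (M.cm A M.top B X) (M.cm M.top M.top M.top Y) := by rw [cm_bto]; simp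
    _ = M.whom (𝟙 A) (M.bto B X Y) ≫ M.bto A (M.wedge B X) Y ≫ M.whom (M.whom (M.δfrom A) (𝟙 (M.wedge B X))) (M.σfrom Y) ≫ M.whom (𝟙 (M.wedge (M.wedge A M.top) (M.wedge B X))) (M.σfrom (M.wedge M.top Y)) ≫ M.whom (M.whom (𝟙 (M.wedge A M.top)) (𝟙 (M.wedge B X))) (M.whom (M.δfrom M.top) (𝟙 (M.wedge M.top Y))) ≫ M.whom (M.cm A M.top B X) (M.cm M.top M.top M.top Y) := by
      slice_lhs 2 3 => rw [bto_natural]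
      simp only [Category.assoc]
    _ = M.whom (𝟙 A) (M.bto B X Y) ≫ M.bto A (M.wedge B X) Y ≫ M.whom (M.bto A B X) (𝟙 Y) ≫ M.whom (M.whom (𝟙 (M.wedge A B)) (M.σfrom X)) (M.σfrom Y ≫ M.whom (M.δfrom M.top) (M.σfrom Y)) := by rw [cm_bto, cm_L3, σfrom_top]; simp

end MedialData
namespace MedialData

variable {C : Type u} [Category.{v} C] {M : MedialData C}

/-- Mac Lane's pentagon. -/
lemma pentagon (A B X Y : C) :
    M.bto A B (M.wedge X Y) ≫ M.bto (M.wedge A B) X Y =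
      M.whom (𝟙 A) (M.bto B X Y) ≫ M.bto A (M.wedge B X) Y ≫
        M.whom (M.bto A B X) (𝟙 Y) := by
  have h := M.psi_cm A M.top M.top M.top B M.top X Y
  have key := (pent_L (M := M) A B X Y).symm.trans
    ((by rw [h] :
      M.whom (M.δfrom A ≫ M.δfrom (M.wedge A M.top) ≫
          M.whom (𝟙 (M.wedge A M.top)) (M.δfrom M.top))
        (M.whom (M.δfrom B) (𝟙 (M.wedge X Y))) ≫
        M.cm (M.wedge A M.top) (M.wedge M.top M.top) (M.wedge B M.top) (M.wedge X Y) ≫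
        M.whom (M.cm A M.top B M.top) (M.cm M.top M.top X Y) ≫
        M.cm (M.wedge A B) (M.wedge M.top M.top) (M.wedge M.top X) (M.wedge M.top Y)
      = M.whom (M.δfrom A ≫ M.δfrom (M.wedge A M.top) ≫
          M.whom (𝟙 (M.wedge A M.top)) (M.δfrom M.top))
        (M.whom (M.δfrom B) (𝟙 (M.wedge X Y))) ≫
        M.whom (M.cm A M.top M.top M.top) (M.cm B M.top X Y) ≫
        M.cm (M.wedge A M.top) (M.wedge M.top M.top) (M.wedge B X) (M.wedge M.top Y) ≫
        M.whom (M.cm A M.top B X) (M.cm M.top M.top M.top Y)).trans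
      (pent_R (M := M) A B X Y))
  -- key : bto ≫ bto ≫ Post = 𝟙∧bto ≫ bto ≫ bto∧𝟙 ≫ Post
  have hpost : (M.whom (M.whom (𝟙 (M.wedge A B)) (M.σfrom X))
        (M.σfrom Y ≫ M.whom (M.δfrom M.top) (M.σfrom Y))) ≫
      (M.whom (M.whom (𝟙 (M.wedge A B)) (M.σto X))
        (M.whom (M.δto M.top) (M.σto Y) ≫ M.σto Y)) = 𝟙 _ := by simp
  calc M.bto A B (M.wedge X Y) ≫ M.bto (M.wedge A B) X Y
      = (M.bto A B (M.wedge X Y) ≫ M.bto (M.wedge A B) X Y ≫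
          M.whom (M.whom (𝟙 (M.wedge A B)) (M.σfrom X))
            (M.σfrom Y ≫ M.whom (M.δfrom M.top) (M.σfrom Y))) ≫
        (M.whom (M.whom (𝟙 (M.wedge A B)) (M.σto X))
          (M.whom (M.δto M.top) (M.σto Y) ≫ M.σto Y)) := by
        simp only [Category.assoc, hpost, Category.comp_id]
    _ = (M.whom (𝟙 A) (M.bto B X Y) ≫ M.bto A (M.wedge B X) Y ≫
          M.whom (M.bto A B X) (𝟙 Y) ≫
          M.whom (M.whom (𝟙 (M.wedge A B)) (M.σfrom X))
            (M.σfrom Y ≫ M.whom (M.δfrom M.top) (M.σfrom Y))) ≫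
        (M.whom (M.whom (𝟙 (M.wedge A B)) (M.σto X))
          (M.whom (M.δto M.top) (M.σto Y) ≫ M.σto Y)) := by rw [key]
    _ = _ := by simp only [Category.assoc, hpost, Category.comp_id]

/-- Mac Lane's triangle. -/
lemma triangle (A X : C) :
    M.bto A M.top X = M.whom (M.δfrom A) (M.σto X) := by
  have pent := pentagon (M := M) A M.top M.top X
  rw [Ksigma, Kdelta] at pent
  have hmid : M.bto A (M.wedge M.top M.top) X =
      M.whom (𝟙 A) (M.whom (M.δto M.top) (𝟙 X)) ≫ M.bto A M.top X ≫
        M.whom (M.whom (𝟙 A) (M.δfrom M.top)) (𝟙 X) := by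
    have hn := bto_natural (M := M) (𝟙 A) (M.δto M.top) (𝟙 X)
    calc M.bto A (M.wedge M.top M.top) X
        = (M.bto A (M.wedge M.top M.top) X ≫ M.whom (M.whom (𝟙 A) (M.δto M.top)) (𝟙 X)) ≫
            M.whom (M.whom (𝟙 A) (M.δfrom M.top)) (𝟙 X) := by simp
      _ = (M.whom (𝟙 A) (M.whom (M.δto M.top) (𝟙 X)) ≫ M.bto A M.top X) ≫
            M.whom (M.whom (𝟙 A) (M.δfrom M.top)) (𝟙 X) := by rw [hn]
      _ = _ := by simp
  have h1 : M.bto A M.top (M.wedge M.top X) =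
      M.whom (𝟙 A) (M.whom (𝟙 M.top) (M.σto X)) ≫ M.bto A M.top X ≫
        M.whom (𝟙 (M.wedge A M.top)) (M.σfrom X) := by
    have hn := bto_natural (M := M) (𝟙 A) (𝟙 M.top) (M.σto X)
    calc M.bto A M.top (M.wedge M.top X)
        = (M.bto A M.top (M.wedge M.top X) ≫ M.whom (M.whom (𝟙 A) (𝟙 M.top)) (M.σto X)) ≫
            M.whom (𝟙 (M.wedge A M.top)) (M.σfrom X) := by simp
      _ = (M.whom (𝟙 A) (M.whom (𝟙 M.top) (M.σto X)) ≫ M.bto A M.top X) ≫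
            M.whom (𝟙 (M.wedge A M.top)) (M.σfrom X) := by rw [hn]
      _ = _ := by simp
  have h2 : M.bto (M.wedge A M.top) M.top X =
      M.whom (M.δto A) (𝟙 (M.wedge M.top X)) ≫ M.bto A M.top X ≫
        M.whom (M.whom (M.δfrom A) (𝟙 M.top)) (𝟙 X) := by
    have hn := bto_natural (M := M) (M.δto A) (𝟙 M.top) (𝟙 X)
    calc M.bto (M.wedge A M.top) M.top X
        = (M.bto (M.wedge A M.top) M.top X ≫ M.whom (M.whom (M.δto A) (𝟙 M.top)) (𝟙 X)) ≫
            M.whom (M.whom (M.δfrom A) (𝟙 M.top)) (𝟙 X) := by simp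
      _ = (M.whom (M.δto A) (M.whom (𝟙 M.top) (𝟙 X)) ≫ M.bto A M.top X) ≫
            M.whom (M.whom (M.δfrom A) (𝟙 M.top)) (𝟙 X) := by rw [hn]
      _ = _ := by simp
  rw [hmid, h1, h2] at pent
  have pent2 := congrArg (fun z => z ≫ M.whom (M.δto (M.wedge A M.top)) (𝟙 X)) pent
  simp [M.δto_natural, M.σto_natural, σfrom_top] at pent2
  simp only [← Category.assoc] at pent2
  have : IsIso (M.bto A M.top X) :=
    ⟨M.bfrom A M.top X, bto_bfrom A M.top X, bfrom_bto A M.top X⟩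
  have E2 := (cancel_mono (M.bto A M.top X)).1 pent2
  calc M.bto A M.top X
      = M.whom (𝟙 A) (M.whom (𝟙 M.top) (M.σfrom X)) ≫
          ((M.whom (𝟙 A) (M.whom (𝟙 M.top) (M.σto X)) ≫ M.bto A M.top X) ≫
            M.whom (M.δto A) (M.σfrom X)) ≫ M.whom (M.δfrom A) (M.σto X) := by simp
    _ = M.whom (𝟙 A) (M.whom (𝟙 M.top) (M.σfrom X)) ≫
          M.whom (𝟙 A) (M.σto (M.wedge M.top X)) ≫ M.whom (M.δfrom A) (M.σto X) := by rw [E2]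
    _ = M.whom (M.δfrom A) (M.σto X) := by simp [reassoc_of% (M.σto_natural (M.σfrom X))]

end MedialData
namespace MedialData

variable {C : Type u} [Category.{v} C] {M : MedialData C}

/-- `c^m_{A,⊤,⊤,B} = 1`. -/
lemma cm_XT (A B : C) : M.cm A M.top M.top B = 𝟙 (M.wedge (M.wedge A M.top) (M.wedge M.top B)) := by
  rw [cm_bto, triangle]; simp

lemma m4_L (A B X : C) :
    M.whom (M.whom (M.δfrom A) (M.σfrom B)) (M.whom (M.σfrom X) (M.δfrom M.top)) ≫
      M.cm (M.wedge A M.top) (M.wedge M.top B) (M.wedge M.top X) (M.wedge M.top M.top) ≫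
      M.whom (M.cm A M.top M.top X) (M.cm M.top B M.top M.top) ≫
      M.cm (M.wedge A M.top) (M.wedge M.top X) (M.wedge M.top M.top) (M.wedge B M.top)
    = M.cm A B X M.top ≫ M.whom (𝟙 (M.wedge A X)) (M.δto B) ≫ M.bfrom A X B ≫ M.whom (M.δfrom A) (𝟙 (M.wedge X B)) ≫ M.whom (M.whom (M.δfrom A) (M.δfrom M.top)) (M.whom (M.σfrom X) (M.δfrom B)) := by
  calc M.whom (M.whom (M.δfrom A) (M.σfrom B)) (M.whom (M.σfrom X) (M.δfrom M.top)) ≫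
      M.cm (M.wedge A M.top) (M.wedge M.top B) (M.wedge M.top X) (M.wedge M.top M.top) ≫
      M.whom (M.cm A M.top M.top X) (M.cm M.top B M.top M.top) ≫
      M.cm (M.wedge A M.top) (M.wedge M.top X) (M.wedge M.top M.top) (M.wedge B M.top)
      = (M.whom (M.whom (M.δfrom A) (M.σfrom B)) (M.whom (M.σfrom X) (M.δfrom M.top)) ≫ M.cm (M.wedge A M.top) (M.wedge M.top B) (M.wedge M.top X) (M.wedge M.top M.top)) ≫
        M.whom (𝟙 (M.wedge (M.wedge A M.top) (M.wedge M.top X))) (M.cm M.top B M.top M.top) ≫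
        M.cm (M.wedge A M.top) (M.wedge M.top X) (M.wedge M.top M.top) (M.wedge B M.top) := by rw [cm_XT]; simp
    _ = (M.cm A B X M.top ≫ M.whom (M.whom (M.δfrom A) (M.σfrom X)) (M.whom (M.σfrom B) (M.δfrom M.top))) ≫
        M.whom (𝟙 (M.wedge (M.wedge A M.top) (M.wedge M.top X))) (M.cm M.top B M.top M.top) ≫
        M.cm (M.wedge A M.top) (M.wedge M.top X) (M.wedge M.top M.top) (M.wedge B M.top) := by rw [M.cm_natural (M.δfrom A) (M.σfrom B) (M.σfrom X) (M.δfrom M.top)]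
    _ = M.cm A B X M.top ≫ M.whom (𝟙 (M.wedge A X)) (M.δto B ≫ M.σfrom B) ≫
        (M.whom (M.whom (M.δfrom A) (M.σfrom X)) (M.whom (M.δfrom M.top) (M.δfrom B)) ≫
          M.cm (M.wedge A M.top) (M.wedge M.top X) (M.wedge M.top M.top) (M.wedge B M.top)) := by
        rw [cm_L2]
        simp [reassoc_of% (M.δto_natural (M.σfrom B))]
    _ = M.cm A B X M.top ≫ M.whom (𝟙 (M.wedge A X)) (M.δto B ≫ M.σfrom B) ≫
        M.cm A X M.top B ≫
        M.whom (M.whom (M.δfrom A) (M.δfrom M.top)) (M.whom (M.σfrom X) (M.δfrom B)) := by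
        rw [← M.cm_natural (M.δfrom A) (M.σfrom X) (M.δfrom M.top) (M.δfrom B)]
    _ = _ := by rw [cm_bfrom]; simp

lemma m4_R (A B X : C) :
    M.whom (M.whom (M.δfrom A) (M.σfrom B)) (M.whom (M.σfrom X) (M.δfrom M.top)) ≫
      M.whom (M.cm A M.top M.top B) (M.cm M.top X M.top M.top) ≫
      M.cm (M.wedge A M.top) (M.wedge M.top B) (M.wedge M.top M.top) (M.wedge X M.top) ≫
      M.whom (M.cm A M.top M.top M.top) (M.cm M.top B X M.top)
    = M.whom (𝟙 (M.wedge A B)) (M.δto X) ≫ M.bfrom A B X ≫ M.whom (𝟙 A) (M.cc B X) ≫ M.whom (M.δfrom A) (𝟙 (M.wedge X B)) ≫ M.whom (M.whom (M.δfrom A) (M.δfrom M.top)) (M.whom (M.σfrom X) (M.δfrom B)) := by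
  calc M.whom (M.whom (M.δfrom A) (M.σfrom B)) (M.whom (M.σfrom X) (M.δfrom M.top)) ≫
      M.whom (M.cm A M.top M.top B) (M.cm M.top X M.top M.top) ≫
      M.cm (M.wedge A M.top) (M.wedge M.top B) (M.wedge M.top M.top) (M.wedge X M.top) ≫
      M.whom (M.cm A M.top M.top M.top) (M.cm M.top B X M.top)
      = M.whom (𝟙 (M.wedge A B)) (M.δto X) ≫ M.whom (𝟙 (M.wedge A B)) (M.σfrom X) ≫
        (M.whom (M.whom (M.δfrom A) (M.σfrom B)) (M.whom (M.δfrom M.top) (M.δfrom X)) ≫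
          M.cm (M.wedge A M.top) (M.wedge M.top B) (M.wedge M.top M.top) (M.wedge X M.top)) ≫
        M.whom (𝟙 (M.wedge (M.wedge A M.top) (M.wedge M.top M.top))) (M.cm M.top B X M.top) := by
        rw [cm_XT, cm_XT, cm_L2]
        simp [reassoc_of% (M.δto_natural (M.σfrom X))]
    _ = M.whom (𝟙 (M.wedge A B)) (M.δto X) ≫ M.whom (𝟙 (M.wedge A B)) (M.σfrom X) ≫
        (M.cm A B M.top X ≫
          M.whom (M.whom (M.δfrom A) (M.δfrom M.top)) (M.whom (M.σfrom B) (M.δfrom X))) ≫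
        M.whom (𝟙 (M.wedge (M.wedge A M.top) (M.wedge M.top M.top))) (M.cm M.top B X M.top) := by
        rw [← M.cm_natural (M.δfrom A) (M.σfrom B) (M.δfrom M.top) (M.δfrom X)]
    _ = _ := by rw [cm_bfrom, cm_cc]; simp

/-- `c^m_{A,B,X,⊤}` in terms of `b` and `c`. -/
lemma cm_m4 (A B X : C) : M.cm A B X M.top =
    M.whom (𝟙 (M.wedge A B)) (M.δto X) ≫ M.bfrom A B X ≫ M.whom (𝟙 A) (M.cc B X) ≫
      M.bto A X B ≫ M.whom (𝟙 (M.wedge A X)) (M.δfrom B) := by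
  have h := M.psi_cm A M.top M.top B M.top X M.top M.top
  have key := (m4_L (M := M) A B X).symm.trans
    ((by rw [h] :
      M.whom (M.whom (M.δfrom A) (M.σfrom B)) (M.whom (M.σfrom X) (M.δfrom M.top)) ≫
        M.cm (M.wedge A M.top) (M.wedge M.top B) (M.wedge M.top X) (M.wedge M.top M.top) ≫
        M.whom (M.cm A M.top M.top X) (M.cm M.top B M.top M.top) ≫
        M.cm (M.wedge A M.top) (M.wedge M.top X) (M.wedge M.top M.top) (M.wedge B M.top)
      = M.whom (M.whom (M.δfrom A) (M.σfrom B)) (M.whom (M.σfrom X) (M.δfrom M.top)) ≫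
        M.whom (M.cm A M.top M.top B) (M.cm M.top X M.top M.top) ≫
        M.cm (M.wedge A M.top) (M.wedge M.top B) (M.wedge M.top M.top) (M.wedge X M.top) ≫
        M.whom (M.cm A M.top M.top M.top) (M.cm M.top B X M.top)).trans
      (m4_R (M := M) A B X))
  calc M.cm A B X M.top
      = (M.cm A B X M.top ≫ M.whom (𝟙 (M.wedge A X)) (M.δto B) ≫ M.bfrom A X B ≫ M.whom (M.δfrom A) (𝟙 (M.wedge X B)) ≫ M.whom (M.whom (M.δfrom A) (M.δfrom M.top)) (M.whom (M.σfrom X) (M.δfrom B))) ≫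
        (M.whom (M.whom (M.δto A) (M.δto M.top)) (M.whom (M.σto X) (M.δto B)) ≫
          M.whom (M.δto A) (𝟙 (M.wedge X B))) ≫ M.bto A X B ≫ M.whom (𝟙 (M.wedge A X)) (M.δfrom B) := by
        simp [reassoc_of% (bfrom_bto (M := M) A X B)]
    _ = (M.whom (𝟙 (M.wedge A B)) (M.δto X) ≫ M.bfrom A B X ≫ M.whom (𝟙 A) (M.cc B X) ≫ M.whom (M.δfrom A) (𝟙 (M.wedge X B)) ≫ M.whom (M.whom (M.δfrom A) (M.δfrom M.top)) (M.whom (M.σfrom X) (M.δfrom B))) ≫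
        (M.whom (M.whom (M.δto A) (M.δto M.top)) (M.whom (M.σto X) (M.δto B)) ≫
          M.whom (M.δto A) (𝟙 (M.wedge X B))) ≫ M.bto A X B ≫ M.whom (𝟙 (M.wedge A X)) (M.δfrom B) := by
        rw [key]
    _ = _ := by simp

end MedialData
namespace MedialData

variable {C : Type u} [Category.{v} C] {M : MedialData C}

lemma hex_L (A B X : C) :
    M.whom (M.σfrom (M.wedge A B)) (M.δfrom X) ≫ M.whom (M.whom (M.δfrom M.top) (𝟙 (M.wedge A B))) (M.whom (M.δfrom X) (M.δfrom M.top)) ≫ M.cm (M.wedge M.top M.top) (M.wedge A B) (M.wedge X M.top) (M.wedge M.top M.top) ≫ M.whom (M.cm M.top M.top X M.top) (M.cm A B M.top M.top) ≫ M.cm (M.wedge M.top X) (M.wedge M.top M.top) (M.wedge A M.top) (M.wedge B M.top)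
    = M.cc (M.wedge A B) X ≫ M.bto X A B ≫ M.whom (𝟙 (M.wedge X A)) (M.σfrom B) ≫ M.whom (M.whom (M.σfrom X) (M.δfrom A)) (M.whom (M.δfrom M.top) (M.δfrom B)) := by
  calc M.whom (M.σfrom (M.wedge A B)) (M.δfrom X) ≫ M.whom (M.whom (M.δfrom M.top) (𝟙 (M.wedge A B))) (M.whom (M.δfrom X) (M.δfrom M.top)) ≫ M.cm (M.wedge M.top M.top) (M.wedge A B) (M.wedge X M.top) (M.wedge M.top M.top) ≫ M.whom (M.cm M.top M.top X M.top) (M.cm A B M.top M.top) ≫ M.cm (M.wedge M.top X) (M.wedge M.top M.top) (M.wedge A M.top) (M.wedge B M.top)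
      = M.whom (M.σfrom (M.wedge A B)) (M.δfrom X) ≫
        (M.cm M.top (M.wedge A B) X M.top ≫
          M.whom (M.whom (M.δfrom M.top) (M.δfrom X)) (M.whom (𝟙 (M.wedge A B)) (M.δfrom M.top))) ≫
        M.whom (M.cm M.top M.top X M.top) (M.cm A B M.top M.top) ≫ M.cm (M.wedge M.top X) (M.wedge M.top M.top) (M.wedge A M.top) (M.wedge B M.top) := by
        slice_lhs 2 3 => rw [← M.cm_natural (M.δfrom M.top) (𝟙 (M.wedge A B)) (M.δfrom X) (M.δfrom M.top)]
        simp only [Category.assoc]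
    _ = M.cc (M.wedge A B) X ≫ M.whom (M.δfrom X) (𝟙 (M.wedge A B)) ≫
        (M.whom (M.whom (M.σfrom X) (M.δfrom M.top)) (M.whom (M.δfrom A) (M.δfrom B)) ≫
          M.cm (M.wedge M.top X) (M.wedge M.top M.top) (M.wedge A M.top) (M.wedge B M.top)) := by
        rw [cm_cc, cm_L3, cm_L2]
        simp [reassoc_of% (M.σto_natural (M.δfrom X)), σfrom_top]
    _ = M.cc (M.wedge A B) X ≫ M.whom (M.δfrom X) (𝟙 (M.wedge A B)) ≫
        M.cm X M.top A B ≫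
        M.whom (M.whom (M.σfrom X) (M.δfrom A)) (M.whom (M.δfrom M.top) (M.δfrom B)) := by
        rw [← M.cm_natural (M.σfrom X) (M.δfrom M.top) (M.δfrom A) (M.δfrom B)]
    _ = _ := by
        rw [cm_bto]
        simp

lemma hex_R (A B X : C) :
    M.whom (M.σfrom (M.wedge A B)) (M.δfrom X) ≫ M.whom (M.whom (M.δfrom M.top) (𝟙 (M.wedge A B))) (M.whom (M.δfrom X) (M.δfrom M.top)) ≫ M.whom (M.cm M.top M.top A B) (M.cm X M.top M.top M.top) ≫ M.cm (M.wedge M.top A) (M.wedge M.top B) (M.wedge X M.top) (M.wedge M.top M.top) ≫ M.whom (M.cm M.top A X M.top) (M.cm M.top B M.top M.top)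
    = M.whom (𝟙 (M.wedge A B)) (M.δfrom X) ≫ M.cm A B X M.top ≫ M.whom (M.cc A X) (M.δto B) ≫ M.whom (𝟙 (M.wedge X A)) (M.σfrom B) ≫ M.whom (M.whom (M.σfrom X) (M.δfrom A)) (M.whom (M.δfrom M.top) (M.δfrom B)) := by
  calc M.whom (M.σfrom (M.wedge A B)) (M.δfrom X) ≫ M.whom (M.whom (M.δfrom M.top) (𝟙 (M.wedge A B))) (M.whom (M.δfrom X) (M.δfrom M.top)) ≫ M.whom (M.cm M.top M.top A B) (M.cm X M.top M.top M.top) ≫ M.cm (M.wedge M.top A) (M.wedge M.top B) (M.wedge X M.top) (M.wedge M.top M.top) ≫ M.whom (M.cm M.top A X M.top) (M.cm M.top B M.top M.top)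
      = M.whom (𝟙 (M.wedge A B)) (M.δfrom X) ≫
        (M.whom (M.whom (M.σfrom A) (M.σfrom B)) (M.whom (M.δfrom X) (M.δfrom M.top)) ≫
          M.cm (M.wedge M.top A) (M.wedge M.top B) (M.wedge X M.top) (M.wedge M.top M.top)) ≫
        M.whom (M.cm M.top A X M.top) (M.cm M.top B M.top M.top) := by
        rw [cm_XT, cm_L3]
        simp
    _ = M.whom (𝟙 (M.wedge A B)) (M.δfrom X) ≫
        M.cm A B X M.top ≫
        M.whom (M.whom (M.σfrom A) (M.δfrom X)) (M.whom (M.σfrom B) (M.δfrom M.top)) ≫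
        M.whom (M.cm M.top A X M.top) (M.cm M.top B M.top M.top) := by
        slice_lhs 2 3 => rw [← M.cm_natural (M.σfrom A) (M.σfrom B) (M.δfrom X) (M.δfrom M.top)]
        simp only [Category.assoc]
    _ = _ := by
        rw [cm_cc, cm_L2]
        simp [reassoc_of% (M.δto_natural (M.σfrom B))]

/-- Mac Lane's hexagon. -/
lemma hexagon (A B X : C) :
    M.bfrom A B X ≫ M.whom (𝟙 A) (M.cc B X) ≫ M.bto A X B ≫
      M.whom (M.cc A X) (𝟙 B) ≫ M.bfrom X A B = M.cc (M.wedge A B) X := by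
  have h := M.psi_cm M.top M.top A B X M.top M.top M.top
  have key := (hex_L (M := M) A B X).symm.trans
    ((by rw [h] : M.whom (M.σfrom (M.wedge A B)) (M.δfrom X) ≫ M.whom (M.whom (M.δfrom M.top) (𝟙 (M.wedge A B))) (M.whom (M.δfrom X) (M.δfrom M.top)) ≫ M.cm (M.wedge M.top M.top) (M.wedge A B) (M.wedge X M.top) (M.wedge M.top M.top) ≫ M.whom (M.cm M.top M.top X M.top) (M.cm A B M.top M.top) ≫ M.cm (M.wedge M.top X) (M.wedge M.top M.top) (M.wedge A M.top) (M.wedge B M.top) = M.whom (M.σfrom (M.wedge A B)) (M.δfrom X) ≫ M.whom (M.whom (M.δfrom M.top) (𝟙 (M.wedge A B))) (M.whom (M.δfrom X) (M.δfrom M.top)) ≫ M.whom (M.cm M.top M.top A B) (M.cm X M.top M.top M.top) ≫ M.cm (M.wedge M.top A) (M.wedge M.top B) (M.wedge X M.top) (M.wedge M.top M.top) ≫ M.whom (M.cm M.top A X M.top) (M.cm M.top B M.top M.top)).trans (hex_R (M := M) A B X))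
  calc M.bfrom A B X ≫ M.whom (𝟙 A) (M.cc B X) ≫ M.bto A X B ≫
      M.whom (M.cc A X) (𝟙 B) ≫ M.bfrom X A B
      = (M.whom (𝟙 (M.wedge A B)) (M.δfrom X) ≫ M.cm A B X M.top ≫ M.whom (M.cc A X) (M.δto B) ≫ M.whom (𝟙 (M.wedge X A)) (M.σfrom B) ≫ M.whom (M.whom (M.σfrom X) (M.δfrom A)) (M.whom (M.δfrom M.top) (M.δfrom B))) ≫ (M.whom (M.whom (M.σto X) (M.δto A)) (M.whom (M.δto M.top) (M.δto B)) ≫ M.whom (𝟙 (M.wedge X A)) (M.σto B) ≫ M.bfrom X A B) := by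
        simp [cm_m4]
    _ = (M.cc (M.wedge A B) X ≫ M.bto X A B ≫ M.whom (𝟙 (M.wedge X A)) (M.σfrom B) ≫ M.whom (M.whom (M.σfrom X) (M.δfrom A)) (M.whom (M.δfrom M.top) (M.δfrom B))) ≫ (M.whom (M.whom (M.σto X) (M.δto A)) (M.whom (M.δto M.top) (M.δto B)) ≫ M.whom (𝟙 (M.wedge X A)) (M.σto B) ≫ M.bfrom X A B) := by rw [← key]
    _ = _ := by simp [bto_bfrom (M := M) X A B, reassoc_of% (bto_bfrom (M := M) X A B)]

end MedialData
/-- `𝒜` carries the structure of a symmetric monoidal category: the tensor `∧`,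
unit `⊤`, associator `b←` (with inverse `b→`), left unitor `σ→`, right unitor `δ→`
and braiding `c` are natural isomorphisms satisfying Mac Lane's pentagon, triangle
and hexagon coherence conditions, with `c` self-inverse. -/
theorem symmetric_monoidal_of_medial (M : MedialData C) :
    -- the associator `b←` is natural
    (∀ {A A' B B' X X' : C} (f : A ⟶ A') (g : B ⟶ B') (h : X ⟶ X'),
        M.whom (M.whom f g) h ≫ M.bfrom A' B' X' =
          M.bfrom A B X ≫ M.whom f (M.whom g h)) ∧
    -- `b→` and `b←` are inverse to each other
    (∀ (A B X : C), M.bfrom A B X ≫ M.bto A B X = 𝟙 (M.wedge (M.wedge A B) X)) ∧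
    (∀ (A B X : C), M.bto A B X ≫ M.bfrom A B X = 𝟙 (M.wedge A (M.wedge B X))) ∧
    -- the left unitor `σ→` and the right unitor `δ→` are natural isomorphisms
    (∀ {A B : C} (f : A ⟶ B), M.whom (𝟙 M.top) f ≫ M.σto B = M.σto A ≫ f) ∧
    (∀ (A : C), M.σto A ≫ M.σfrom A = 𝟙 (M.wedge M.top A)) ∧
    (∀ (A : C), M.σfrom A ≫ M.σto A = 𝟙 A) ∧
    (∀ {A B : C} (f : A ⟶ B), M.whom f (𝟙 M.top) ≫ M.δto B = M.δto A ≫ f) ∧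
    (∀ (A : C), M.δto A ≫ M.δfrom A = 𝟙 (M.wedge A M.top)) ∧
    (∀ (A : C), M.δfrom A ≫ M.δto A = 𝟙 A) ∧
    -- the braiding `c` is natural and self-inverse
    (∀ {A A' B B' : C} (f : A ⟶ A') (g : B ⟶ B'),
        M.whom f g ≫ M.cc A' B' = M.cc A B ≫ M.whom g f) ∧
    (∀ (A B : C), M.cc A B ≫ M.cc B A = 𝟙 (M.wedge A B)) ∧
    -- Mac Lane's pentagon (b5)
    (∀ (A B X Y : C),
        M.bto A B (M.wedge X Y) ≫ M.bto (M.wedge A B) X Y =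
          M.whom (𝟙 A) (M.bto B X Y) ≫ M.bto A (M.wedge B X) Y ≫
            M.whom (M.bto A B X) (𝟙 Y)) ∧
    -- Mac Lane's triangle (bδσ)
    (∀ (A X : C), M.bto A M.top X = M.whom (M.δfrom A) (M.σto X)) ∧
    -- Mac Lane's hexagon (bc)
    (∀ (A B X : C),
        M.bfrom A B X ≫ M.whom (𝟙 A) (M.cc B X) ≫ M.bto A X B ≫
            M.whom (M.cc A X) (𝟙 B) ≫ M.bfrom X A B =
          M.cc (M.wedge A B) X) := by
  exact ⟨fun f g h => MedialData.bfrom_natural f g h,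
    MedialData.bfrom_bto (M := M), MedialData.bto_bfrom (M := M),
    fun f => M.σto_natural f, M.σto_σfrom, M.σfrom_σto,
    fun f => M.δto_natural f, M.δto_δfrom, M.δfrom_δto,
    fun f g => MedialData.cc_natural f g, MedialData.cc_cc (M := M),
    MedialData.pentagon (M := M), MedialData.triangle (M := M),
    MedialData.hexagon (M := M)⟩
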